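/- arXiv:1611.00918 — 6 statements merged into one kernel-verified Lean document; each statement's English description precedes it below -/
import Mathlib

section
/- Work over the alphabet {0,1}. For a Boolean vector a ∈ {0,1}^d define the string t(a) = t(a₁)t(a₂)⋯t(a_d), where each 1-bit is encoded as t(1) = "001" and each 0-bit as t(0) = "01". For b ∈ {0,1}^d define the language C(b) = c(b₁) · c(b₂) ⋯ c(b_d), where c(1) = {"01"} and c(0) = { 0^k 1 : k ≥ 1 }. Then t(a) ∈ C(b) if and only if a and b are orthogonal, i.e., a_i · b_i = 0 for all 1 ≤ i ≤ d. (This is the ∘+ orthogonality gadget from the proof of Theorem 10; the c-language for a 1-bit of b is matched only by the encoding of a 0-bit of a, while the c-language for a 0-bit of b is matched by both encodings.) -/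
/-- Encoding of a bit of the vector `a`: `t 1 = "001"`, `t 0 = "01"`
(with `true` for 1, `false` for 0). -/
def bitStr : Bool → List Bool
  | true => [false, false, true]
  | false => [false, true]

/-- The `∘+` gadget language for a bit of `b`: `c 1 = {"01"}`, `c 0 = { 0^k 1 : k ≥ 1 }`. -/
def bitLang : Bool → Language Bool
  | true => {[false, true]}
  | false => {w | ∃ k, 1 ≤ k ∧ w = List.replicate k false ++ [true]}

lemma rep_cancel : ∀ (j k : ℕ) (s t : List Bool),
    List.replicate j false ++ true :: s = List.replicate k false ++ true :: t →
    j = k ∧ s = t := by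
  intro j
  induction j with
  | zero =>
    intro k s t h
    cases k with
    | zero => simpa using h
    | succ k => simp [List.replicate_succ] at h
  | succ j ih =>
    intro k s t h
    cases k with
    | zero => simp [List.replicate_succ] at h
    | succ k =>
      simp only [List.replicate_succ, List.cons_append, List.cons.injEq] at h
      obtain ⟨j_eq, s_eq⟩ := ih k s t h.2
      exact ⟨by omega, s_eq⟩

lemma bitStr_eq (x : Bool) :
    bitStr x = List.replicate (if x then 2 else 1) false ++ [true] := by
  cases x <;> rfl

lemma mem_bitLang (y : Bool) (w : List Bool) :
    w ∈ bitLang y ↔ ∃ k, 1 ≤ k ∧ w = List.replicate k false ++ [true] ∧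
      (y = true → k = 1) := by
  cases y with
  | false => simp [bitLang]; tauto
  | true =>
    simp only [bitLang, Set.mem_singleton_iff]
    constructor
    · rintro rfl; exact ⟨1, le_refl 1, rfl, fun _ => rfl⟩
    · rintro ⟨k, hk, rfl, h1⟩; rw [h1 (by trivial)]; rfl

lemma aux (l : List (Bool × Bool)) :
    (l.map fun p => bitStr p.1).flatten ∈ (l.map fun p => bitLang p.2).prod ↔
      ∀ p ∈ l, (p.1 && p.2) = false := by
  induction l with
  | nil => simp [Language.mem_one]
  | cons p l ih =>
    obtain ⟨x, y⟩ := p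
    simp only [List.map_cons, List.flatten_cons, List.prod_cons, Language.mem_mul,
      List.mem_cons, forall_eq_or_imp]
    constructor
    · rintro ⟨w, hw, v, hv, heq⟩
      rw [mem_bitLang] at hw
      obtain ⟨k, hk1, rfl, hky⟩ := hw
      rw [bitStr_eq] at heq
      simp only [List.append_assoc, List.singleton_append] at heq
      obtain ⟨hjk, hveq⟩ := rep_cancel k _ v _ heq
      subst hveq
      refine ⟨?_, (ih).1 hv⟩
      cases y with
      | false => simp
      | true =>
        have := hky rfl
        cases x with
        | false => simp
        | true => simp at hjk; omega
    · rintro ⟨hxy, hrest⟩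
      refine ⟨bitStr x, ?_, _, ih.2 hrest, rfl⟩
      rw [mem_bitLang, bitStr_eq]
      refine ⟨if x then 2 else 1, by split <;> norm_num, rfl, ?_⟩
      intro hy
      cases x with
      | false => rfl
      | true => simp [hy] at hxy

theorem mem_plusGadget_iff_orthogonal (d : ℕ) (a b : Fin d → Bool) :
    (List.ofFn fun i => bitStr (a i)).flatten ∈ (List.ofFn fun i => bitLang (b i)).prod ↔
      ∀ i : Fin d, (a i && b i) = false := by
  have h := aux (List.ofFn fun i => (a i, b i))
  simp only [List.map_ofFn, Function.comp_def, List.forall_mem_ofFn_iff] at h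
  exact h
end

section
/- Let Σ be an alphabet, x ∈ Σ, L a language over Σ, and s a string over Σ in which the symbol x does not occur. Then the string x·s·x (i.e., [x] ++ s ++ [x]) belongs to ({[x]} · L · {[x]})⁺ if and only if s ∈ L. (This is the fresh-symbol bracketing argument of reduction rule 4 of Lemma 8: prepending a + to a type starting with ∘ yields an at least as hard membership problem.) -/
open Computability

/-- `L⁺ := L · L∗`, the set of concatenations of one or more words of `L`. -/
def Language.plus {α : Type*} (L : Language α) : Language α := L * L∗

theorem bracketing_fresh_symbol {α : Type*} (x : α) (L : Language α) (s : List α)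
    (hx : x ∉ s) :
    ([x] ++ s ++ [x]) ∈ Language.plus (({[x]} : Language α) * L * {[x]}) ↔ s ∈ L := by
  classical
  constructor
  · rintro ⟨u, hu, v, hv, huv⟩
    obtain ⟨u1, hu1, c, rfl, rfl⟩ := hu
    obtain ⟨a, rfl, t, ht, rfl⟩ := hu1
    obtain ⟨S, rfl, hS⟩ := hv
    -- huv : a ++ t ++ c ++ S.join = [x] ++ s ++ [x]
    have hcnt : ([x] ++ s ++ [x]).count x = 2 := by
      simp [List.count_append, List.count_eq_zero_of_not_mem hx]
    rw [← huv] at hcnt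
    simp [List.count_append] at hcnt
    have hjoin : (S.flatten).count x = 0 := by omega
    have hSnil : S = [] := by
      cases S with
      | nil => rfl
      | cons y S' =>
        exfalso
        obtain ⟨y1, hy1, c, rfl, rfl⟩ := hS y (by simp)
        obtain ⟨a, rfl, t', ht', rfl⟩ := hy1
        simp [List.count_append] at hjoin
    subst hSnil
    have : t ++ [x] = s ++ [x] := by simpa using huv
    have hts : t = s := by
      have h2 := List.append_inj' this rfl
      exact h2.1
    rwa [hts] at ht
  · intro hs
    refine ⟨[x] ++ s ++ [x], ⟨[x] ++ s, ⟨[x], rfl, s, hs, rfl⟩, [x], rfl, by simp⟩,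
      [], ⟨[], rfl, by simp⟩, by simp⟩
end

section
/- For any index type ι, any family of languages L : ι → Language Σ, and any string s over Σ: s has an infix (contiguous substring, possibly empty) belonging to ⋃ i, (L i)⁺ if and only if s has an infix belonging to ⋃ i, L i. (This is simplification rule 3 of Lemma 15 for pattern matching: a prefix |+ of the type can be replaced by |, since a string contains a substring matching E₁⁺ | ⋯ | E_k⁺ iff it contains a substring matching E₁ | ⋯ | E_k.) -/
open Computability

theorem infix_iSup_plus_iff_infix_iSup {α : Type*} {ι : Type*} (L : ι → Language α)
    (s : List α) :
    (∃ t : List α, t <:+: s ∧ t ∈ ⨆ i, Language.plus (L i)) ↔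
      ∃ t : List α, t <:+: s ∧ t ∈ ⨆ i, L i := by
  constructor
  · rintro ⟨t, hinf, ht⟩
    rw [Language.mem_iSup] at ht
    obtain ⟨i, a, ha, b, hb, rfl⟩ := ht
    exact ⟨a, (List.infix_append [] a b).trans hinf, Language.mem_iSup.2 ⟨i, ha⟩⟩
  · rintro ⟨t, hinf, ht⟩
    rw [Language.mem_iSup] at ht
    obtain ⟨i, hi⟩ := ht
    refine ⟨t, hinf, Language.mem_iSup.2 ⟨i, ?_⟩⟩
    exact ⟨t, hi, [], Language.nil_mem_kstar _, List.append_nil t⟩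
end

section
/- Let V be a finite partial order in which, for every v ∈ V, the set of elements above v, {u ∈ V : v ≤ u}, is a chain (a rooted-forest order, with larger elements closer to the roots). Let M ⊆ V be a set of marked elements and let λ ≥ 1. A λ-packing is a family 𝓑 of pairwise disjoint subsets of V such that every B ∈ 𝓑 is an order interval B = Icc(x_B, y_B) for some x_B ≤ y_B with x_B ∈ M and y_B ∈ M, and B contains exactly λ marked elements. 𝓑 is maximal if there is no interval B' = Icc(x', y') with x' ≤ y', x', y' ∈ M, containing exactly λ marked elements, and disjoint from every member of 𝓑. Theorem: if 𝓑 is a maximal λ-packing, then for every v ∈ V the set { u ∈ M : v ≤ u and Icc(v, u) ∩ ⋃𝓑 = ∅ } has fewer than λ elements. (This maximality property is what guarantees that the jump-query algorithm of Lemma 4 reaches a packing path after fewer than λ lowest-marked-ancestor steps.) -/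
/-!
The marked elements `u ≥ v` whose interval `Icc v u` misses every packed interval form a chain
(they all lie above `v`), and this chain is closed downwards among the marked elements above `v`.
If it had at least `λ` elements, the interval from its least element to its `λ`-th element would
contain exactly `λ` marked elements and avoid the packing, contradicting maximality.
-/

open Set

section Chain

variable {α : Type*} [PartialOrder α] {s : Set α}

theorem IsChain.exists_isGreatest (hs : IsChain (· ≤ ·) s) (hfin : s.Finite)
    (hne : s.Nonempty) : ∃ a, IsGreatest s a := by
  obtain ⟨a, ha⟩ := hfin.exists_maximal hne
  exact ⟨a, ha.prop, fun _ hb => hs.le_of_not_gt ha.prop hb (ha.not_gt hb)⟩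

theorem IsChain.exists_isLeast (hs : IsChain (· ≤ ·) s) (hfin : s.Finite)
    (hne : s.Nonempty) : ∃ a, IsLeast s a := by
  obtain ⟨a, ha⟩ := hfin.exists_minimal hne
  exact ⟨a, ha.prop, fun _ hb => hs.le_of_not_gt hb ha.prop (ha.not_lt hb)⟩

theorem IsChain.exists_ncard_inter_Iic_eq {s : Set α} (hs : IsChain (· ≤ ·) s)
    (hfin : s.Finite) {n : ℕ} (hn : n ≠ 0) (hns : n ≤ s.ncard) :
    ∃ y ∈ s, (s ∩ Iic y).ncard = n := by
  obtain ⟨m, hm⟩ := hs.exists_isGreatest hfin (nonempty_of_ncard_ne_zero (by omega))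
  rcases hns.eq_or_lt with rfl | hlt
  · exact ⟨m, hm.1, by rw [inter_eq_left.2 fun _ hb => mem_Iic.2 (hm.2 hb)]⟩
  · obtain ⟨y, hy, hcard⟩ := (hs.mono sdiff_subset).exists_ncard_inter_Iic_eq hfin.sdiff hn
      (by rw [ncard_sdiff_singleton_of_mem hm.1]; omega)
    have hmy : m ∉ s ∩ Iic y := fun hmy => hy.2 (le_antisymm (hm.2 hy.1) hmy.2)
    exact ⟨y, hy.1, by rwa [sdiff_inter_right_comm, sdiff_singleton_eq_self hmy] at hcard⟩
termination_by s.ncard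
decreasing_by exact ncard_sdiff_singleton_lt_of_mem hm.1 hfin

end Chain

section Ancestors

variable {V : Type*} [PartialOrder V] {M U : Set V} {v x y : V}

def unpackedMarkedAncestors (M U : Set V) (v : V) : Set V :=
  {u | u ∈ M ∧ v ≤ u ∧ Icc v u ∩ U = ∅}

theorem disjoint_Icc_of_mem_unpackedMarkedAncestors (hvx : v ≤ x)
    (hy : y ∈ unpackedMarkedAncestors M U v) : Disjoint (Icc x y) U := by
  rw [disjoint_iff_inter_eq_empty, ← subset_empty_iff, ← hy.2.2]
  exact inter_subset_inter_left U (Icc_subset_Icc_left hvx)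

theorem Icc_inter_eq_unpackedMarkedAncestors_inter_Iic
    (hx : IsLeast (unpackedMarkedAncestors M U v) x) (hy : y ∈ unpackedMarkedAncestors M U v) :
    Icc x y ∩ M = unpackedMarkedAncestors M U v ∩ Iic y := by
  ext w
  constructor
  · rintro ⟨⟨hxw, hwy⟩, hwM⟩
    have hvy : Disjoint (Icc v y) U := disjoint_Icc_of_mem_unpackedMarkedAncestors le_rfl hy
    refine ⟨⟨hwM, hx.1.2.1.trans hxw, ?_⟩, hwy⟩
    exact (hvy.mono_left (Icc_subset_Icc_right hwy)).inter_eq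
  · rintro ⟨hw, hwy⟩
    exact ⟨⟨hx.2 hw, hwy⟩, hw.1⟩

end Ancestors

theorem maximal_packing_few_unpacked_marked_ancestors_general
    {V : Type*} [Fintype V] [PartialOrder V]
    (hforest : ∀ v : V, IsChain (· ≤ ·) {u : V | v ≤ u})
    (M : Set V) (lam : ℕ) (hlam : 1 ≤ lam) (𝓑 : Set (Set V))
    (hmax : ¬∃ x y : V, x ≤ y ∧ x ∈ M ∧ y ∈ M ∧ (Set.Icc x y ∩ M).ncard = lam ∧
      ∀ B ∈ 𝓑, Disjoint (Set.Icc x y) B) :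
    ∀ v : V, {u : V | u ∈ M ∧ v ≤ u ∧ Set.Icc v u ∩ ⋃₀ 𝓑 = ∅}.ncard < lam := by
  intro v
  by_contra! hcard
  change lam ≤ (unpackedMarkedAncestors M (⋃₀ 𝓑) v).ncard at hcard
  have hchain : IsChain (· ≤ ·) (unpackedMarkedAncestors M (⋃₀ 𝓑) v) :=
    (hforest v).mono fun _ hu => hu.2.1
  obtain ⟨y, hy, hy_card⟩ := hchain.exists_ncard_inter_Iic_eq (toFinite _) (by omega) hcard
  obtain ⟨x, hx⟩ := hchain.exists_isLeast (toFinite _) ⟨y, hy⟩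
  refine hmax ⟨x, y, hx.2 hy, hx.1.1, hy.1, ?_, fun B hB => ?_⟩
  · rwa [Icc_inter_eq_unpackedMarkedAncestors_inter_Iic hx hy]
  · exact (disjoint_Icc_of_mem_unpackedMarkedAncestors hx.1.2.1 hy).mono_right
      (subset_sUnion_of_mem hB)

theorem maximal_packing_few_unpacked_marked_ancestors
    {V : Type*} [Fintype V] [PartialOrder V]
    (hforest : ∀ v : V, IsChain (· ≤ ·) {u : V | v ≤ u})
    (M : Set V) (lam : ℕ) (hlam : 1 ≤ lam) (𝓑 : Set (Set V))
    (hdisj : 𝓑.Pairwise Disjoint)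
    (hintervals : ∀ B ∈ 𝓑, ∃ x y : V, x ≤ y ∧ x ∈ M ∧ y ∈ M ∧ B = Set.Icc x y ∧
      (B ∩ M).ncard = lam)
    (hmax : ¬∃ x y : V, x ≤ y ∧ x ∈ M ∧ y ∈ M ∧ (Set.Icc x y ∩ M).ncard = lam ∧
      ∀ B ∈ 𝓑, Disjoint (Set.Icc x y) B) :
    ∀ v : V, {u : V | u ∈ M ∧ v ≤ u ∧ Set.Icc v u ∩ ⋃₀ 𝓑 = ∅}.ncard < lam :=
  maximal_packing_few_unpacked_marked_ancestors_general hforest M lam hlam 𝓑 hmax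
end

section
/- Let n ≥ 1 and let G be a simple graph on the vertex set {1, …, n} (formally Fin n, with its natural linear order). Work over the alphabet Σ consisting of one symbol per vertex plus the two special symbols # and $ (formally Fin n ⊕ Fin 2). For a vertex i, write ⟨i..n⟩ for the word listing the vertex symbols i, i+1, …, n in increasing order, write ⟨1..i−1⟩ for the word listing 1, …, i−1 (the empty word if i = 1), and write N = ⟨1..n⟩. Let S = (i₁, …, i_r) be a finite list of vertices and define the string T_S = $ N # i₁ # N # i₂ # N # ⋯ # i_r # N $. Define the dictionary language D ⊆ Σ* whose words are: (a) ⟨i..n⟩ # j # ⟨1..i−1⟩ for every ordered pair (i, j) of adjacent vertices of G; (b) $ ⟨1..i−1⟩ for every vertex i; (c) ⟨i..n⟩ $ for every vertex i. Then T_S ∈ D* if and only if there exists a vertex i that is adjacent in G to every vertex occurring in S. (This is the correctness of the simplified neighborhood gadget in the reduction of Theorem 8 from k-Clique to Word Break.) -/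
open Computability

namespace NeighborhoodGadget

variable {n : ℕ}

/-- The special symbol `#`. -/
def hash : Fin n ⊕ Fin 2 := Sum.inr 0

/-- The special symbol `$`. -/
def dollar : Fin n ⊕ Fin 2 := Sum.inr 1

/-- `⟨i..n⟩`: the word listing the vertex symbols `i, i+1, …, n` in increasing order. -/
def fromTo (i : Fin n) : List (Fin n ⊕ Fin 2) :=
  ((List.finRange n).filter fun v => decide (i ≤ v)).map Sum.inl

/-- `⟨1..i-1⟩`: the word listing the vertex symbols `1, …, i-1` in increasing order
(empty if `i` is the first vertex). -/
def upTo (i : Fin n) : List (Fin n ⊕ Fin 2) :=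
  ((List.finRange n).filter fun v => decide (v < i)).map Sum.inl

/-- `N = ⟨1..n⟩`: the word listing all vertex symbols in increasing order. -/
def allV (n : ℕ) : List (Fin n ⊕ Fin 2) := (List.finRange n).map Sum.inl

/-- The string `T_S = $ N # i₁ # N # i₂ # N # ⋯ # i_r # N $` for `S = (i₁, …, i_r)`. -/
def T (S : List (Fin n)) : List (Fin n ⊕ Fin 2) :=
  [dollar] ++ allV n ++ (S.map fun v => [hash, Sum.inl v, hash] ++ allV n).flatten ++ [dollar]

/-- The dictionary: (a) `⟨i..n⟩ # j # ⟨1..i-1⟩` for adjacent `i, j`;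
(b) `$ ⟨1..i-1⟩` for every vertex `i`; (c) `⟨i..n⟩ $` for every vertex `i`. -/
def dict (G : SimpleGraph (Fin n)) : Language (Fin n ⊕ Fin 2) :=
  {w | (∃ i j : Fin n, G.Adj i j ∧ w = fromTo i ++ [hash, Sum.inl j, hash] ++ upTo i) ∨
    (∃ i : Fin n, w = dollar :: upTo i) ∨
    (∃ i : Fin n, w = fromTo i ++ [dollar])}

/-! ### Auxiliary lemmas -/

lemma filter_lt_append_filter_le (i : Fin n) :
    ∀ (l : List (Fin n)), l.Pairwise (· ≤ ·) →
      (l.filter fun v => decide (v < i)) ++ (l.filter fun v => decide (i ≤ v)) = l := by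
  intro l hl
  induction l with
  | nil => simp
  | cons a t ih =>
    rw [List.pairwise_cons] at hl
    by_cases h : a < i
    · rw [List.filter_cons_of_pos (by simpa using h),
        List.filter_cons_of_neg (by simpa using not_le.mpr h)]
      simp [ih hl.2]
    · rw [List.filter_cons_of_neg (by simpa using h),
        List.filter_cons_of_pos (by simpa using not_lt.mp h)]
      have h1 : (t.filter fun v => decide (v < i)) = [] := by
        rw [List.filter_eq_nil_iff]
        intro x hx
        simp only [decide_eq_true_eq]
        exact not_lt.mpr (le_trans (not_lt.mp h) (hl.1 x hx))
      have h2 : (t.filter fun v => decide (i ≤ v)) = t := by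
        rw [List.filter_eq_self]
        intro x hx
        simp only [decide_eq_true_eq]
        exact le_trans (not_lt.mp h) (hl.1 x hx)
      simp [h1, h2]

lemma allV_eq (i : Fin n) : allV n = upTo i ++ fromTo i := by
  rw [upTo, fromTo, ← List.map_append, filter_lt_append_filter_le i _ (List.pairwise_le_finRange n)]
  rfl

lemma mem_fromTo (i : Fin n) : Sum.inl i ∈ fromTo i := by
  simp [fromTo, List.mem_filter, List.mem_finRange]

lemma fromTo_ne_nil (i : Fin n) : fromTo i ≠ [] :=
  List.ne_nil_of_mem (mem_fromTo i)

lemma fromTo_inj {i j : Fin n} (h : fromTo i = fromTo j) : i = j := by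
  have h1 : Sum.inl i ∈ fromTo j := h ▸ mem_fromTo i
  have h2 : Sum.inl j ∈ fromTo i := h ▸ mem_fromTo j
  simp only [fromTo, List.mem_map, List.mem_filter, decide_eq_true_eq] at h1 h2
  obtain ⟨a, ⟨_, ha⟩, ha'⟩ := h1
  obtain ⟨b, ⟨_, hb⟩, hb'⟩ := h2
  cases Sum.inl_injective ha'
  cases Sum.inl_injective hb'
  exact le_antisymm hb ha

/-- Key cancellation: two runs of vertex-symbols followed by non-vertex symbols match up. -/
lemma key : ∀ (A B : List (Fin n)) {x y : Fin n ⊕ Fin 2} {u v : List (Fin n ⊕ Fin 2)},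
    (∀ a, x ≠ Sum.inl a) → (∀ a, y ≠ Sum.inl a) →
    A.map Sum.inl ++ x :: u = B.map Sum.inl ++ y :: v →
    A = B ∧ x = y ∧ u = v := by
  intro A
  induction A with
  | nil =>
    intro B x y u v hx hy h
    cases B with
    | nil => simpa using h
    | cons b B' => simp at h; exact absurd h.1 (hx b)
  | cons a A' ih =>
    intro B x y u v hx hy h
    cases B with
    | nil => simp at h; exact absurd h.1.symm (hy a)
    | cons b B' =>
      simp only [List.map_cons, List.cons_append, List.cons.injEq] at h
      cases Sum.inl_injective h.1
      obtain ⟨h1, h2, h3⟩ := ih B' hx hy h.2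
      exact ⟨by rw [h1], h2, h3⟩

lemma hash_ne_inl (a : Fin n) : hash ≠ Sum.inl a := by simp [hash]
lemma dollar_ne_inl (a : Fin n) : dollar ≠ Sum.inl a := by simp [dollar]
lemma hash_ne_dollar : (hash : Fin n ⊕ Fin 2) ≠ dollar := by simp [hash, dollar]

/-- `fromTo` and `upTo` as maps, to use `key`. -/
lemma fromTo_map (i : Fin n) :
    fromTo i = ((List.finRange n).filter fun v => decide (i ≤ v)).map Sum.inl := rfl

lemma main_aux (G : SimpleGraph (Fin n)) (i₀ : Fin n) :
    ∀ (S : List (Fin n)) (L : List (List (Fin n ⊕ Fin 2))),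
      (∀ w ∈ L, w ∈ dict G) →
      L.flatten = fromTo i₀ ++
        (S.map fun v => [hash, Sum.inl v, hash] ++ allV n).flatten ++ [dollar] →
      ∀ v ∈ S, G.Adj i₀ v := by
  intro S
  induction S with
  | nil => intro L _ _ v hv; simp at hv
  | cons v S' ih =>
    intro L hL hflat
    cases L with
    | nil =>
      exfalso
      have := congrArg List.length hflat
      simp at this
    | cons w L' =>
      have hw := hL w (by simp)
      simp only [List.map_cons, List.flatten_cons, List.cons_append,
        List.append_assoc] at hflat
      rcases hw with ⟨i, j, hadj, rfl⟩ | ⟨i, rfl⟩ | ⟨i, rfl⟩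
      · -- type (a) word
        have h : ((List.finRange n).filter fun v => decide (i ≤ v)).map Sum.inl ++
            hash :: (Sum.inl j :: hash :: (upTo i ++ L'.flatten)) =
            ((List.finRange n).filter fun v => decide (i₀ ≤ v)).map Sum.inl ++
            hash :: (Sum.inl v :: hash :: (allV n ++
              ((S'.map fun v => [hash, Sum.inl v, hash] ++ allV n).flatten ++ [dollar]))) := by
          simpa [fromTo] using hflat
        obtain ⟨hAB, -, htail⟩ := key _ _ hash_ne_inl hash_ne_inl h
        have hii : i = i₀ := fromTo_inj (by rw [fromTo_map, fromTo_map, hAB])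
        subst hii
        simp only [List.cons.injEq] at htail
        cases Sum.inl_injective htail.1
        have htail2 := htail.2.2
        rw [allV_eq i, List.append_assoc] at htail2
        have hrest := List.append_cancel_left htail2
        intro x hx
        rcases List.mem_cons.mp hx with rfl | hx'
        · exact hadj
        · refine ih L' (fun w hw => hL w (by simp [hw])) ?_ x hx'
          rw [hrest]
          simp only [← allV_eq i, List.append_assoc]
      · -- type (b) word: starts with dollar, impossible
        exfalso
        obtain ⟨a, ha⟩ := List.exists_cons_of_ne_nil (fromTo_ne_nil i₀)
        obtain ⟨l, hl⟩ := ha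
        have hda : dollar = a := by
          have h' := congrArg (·.head?) hflat
          rw [hl] at h'
          simpa using h'
        have ha : ∃ b, a = Sum.inl b := by
          have : a ∈ fromTo i₀ := by rw [hl]; simp
          simp only [fromTo, List.mem_map] at this
          obtain ⟨b, -, hb⟩ := this
          exact ⟨b, hb.symm⟩
        obtain ⟨b, rfl⟩ := ha
        exact dollar_ne_inl b hda
      · -- type (c) word: dollar vs hash
        have h : ((List.finRange n).filter fun v => decide (i ≤ v)).map Sum.inl ++
            dollar :: L'.flatten =
            ((List.finRange n).filter fun v => decide (i₀ ≤ v)).map Sum.inl ++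
            hash :: (Sum.inl v :: hash :: (allV n ++
              ((S'.map fun v => [hash, Sum.inl v, hash] ++ allV n).flatten ++ [dollar]))) := by
          simpa [fromTo] using hflat
        obtain ⟨-, hxy, -⟩ := key _ _ dollar_ne_inl hash_ne_inl h
        exact absurd hxy.symm hash_ne_dollar

theorem neighborhood_gadget_correct (n : ℕ) (hn : 1 ≤ n) (G : SimpleGraph (Fin n))
    (S : List (Fin n)) :
    T S ∈ (dict G)∗ ↔ ∃ i : Fin n, ∀ v ∈ S, G.Adj i v := by
  constructor
  · intro h
    rw [Language.mem_kstar] at h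
    obtain ⟨L, hTL, hL⟩ := h
    cases L with
    | nil => simp [T] at hTL
    | cons w L' =>
      have hw := hL w (by simp)
      rcases hw with ⟨i, j, hadj, rfl⟩ | ⟨i, rfl⟩ | ⟨i, rfl⟩
      · exfalso
        -- fromTo i starts with inl, T starts with dollar
        obtain ⟨a, l, hl⟩ := List.exists_cons_of_ne_nil (fromTo_ne_nil i)
        have : a ∈ fromTo i := by rw [hl]; simp
        simp only [fromTo, List.mem_map] at this
        obtain ⟨b, -, hb⟩ := this
        rw [hl] at hTL
        simp only [T, List.flatten_cons, List.cons_append, List.append_assoc] at hTL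
        have := congrArg (·.head?) hTL
        simp at this
        rw [← hb] at this
        exact dollar_ne_inl b this
      · -- w = dollar :: upTo i; apply main_aux
        have h2 : upTo i ++ L'.flatten = upTo i ++ (fromTo i ++
            ((S.map fun v => [hash, Sum.inl v, hash] ++ allV n).flatten ++ [dollar])) := by
          have h3 : allV n ++ ((S.map fun v => [hash, Sum.inl v, hash] ++ allV n).flatten ++ [dollar]) = upTo i ++ L'.flatten := by
            have := hTL
            simp only [T, List.flatten_cons, List.cons_append, List.singleton_append,
              List.cons.injEq, List.append_assoc, true_and] at this
            exact this
          rw [← h3, allV_eq i]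
          simp [List.append_assoc]
        have hrest := List.append_cancel_left h2
        refine ⟨i, main_aux G i S L' (fun w hw => hL w (by simp [hw])) ?_⟩
        rw [hrest]
        simp [List.append_assoc]
      · exfalso
        obtain ⟨a, l, hl⟩ := List.exists_cons_of_ne_nil (fromTo_ne_nil i)
        have : a ∈ fromTo i := by rw [hl]; simp
        simp only [fromTo, List.mem_map] at this
        obtain ⟨b, -, hb⟩ := this
        rw [hl] at hTL
        simp only [T, List.flatten_cons, List.cons_append, List.append_assoc] at hTL
        have := congrArg (·.head?) hTL
        simp at this
        rw [← hb] at this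
        exact dollar_ne_inl b this
  · rintro ⟨i, hi⟩
    rw [Language.mem_kstar]
    refine ⟨(dollar :: upTo i) ::
      (S.map fun v => fromTo i ++ [hash, Sum.inl v, hash] ++ upTo i) ++
      [fromTo i ++ [dollar]], ?_, ?_⟩
    · -- flatten equality
      suffices h : ∀ S' : List (Fin n),
          allV n ++ (S'.map fun v => hash :: Sum.inl v :: hash :: allV n).flatten =
          upTo i ++ ((S'.map fun v => fromTo i ++ hash :: Sum.inl v :: hash :: upTo i).flatten
            ++ fromTo i) by
        simp only [T, List.flatten_cons, List.flatten_append, List.flatten_nil,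
          List.append_nil, List.cons_append, List.nil_append, List.singleton_append]
        rw [h S]
        simp [List.append_assoc]
      intro S'
      induction S' with
      | nil => simpa using allV_eq i
      | cons v S'' ih =>
        simp only [List.map_cons, List.flatten_cons, List.cons_append, List.append_assoc,
          allV_eq i] at ih ⊢
        rw [ih]
    · intro y hy
      simp only [List.mem_cons, List.mem_append, List.mem_map, List.mem_singleton] at hy
      rcases hy with (rfl | ⟨v, hv, rfl⟩) | (rfl | h')
      · exact Or.inr (Or.inl ⟨i, rfl⟩)
      · exact Or.inl ⟨i, v, hi v hv, rfl⟩
      · exact Or.inr (Or.inr ⟨i, rfl⟩)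
      · simp at h'

end NeighborhoodGadget
end

section
/- Let n ≥ 1 and let G be a simple graph on the vertex set {1, …, n} (formally Fin n, with its natural linear order). Work over the alphabet Σ consisting of one symbol per vertex plus three special symbols #, $, γ. For a vertex i, write ⟨i..n⟩ for the word listing the vertex symbols i, …, n in increasing order, ⟨1..i−1⟩ for the word listing 1, …, i−1 (empty if i = 1), and N = ⟨1..n⟩. Let S = (i₁, …, i_r) be a finite list of vertices, let T_S = $ N # i₁ # N # i₂ # N # ⋯ # i_r # N $, and let T = T_S γ T_S. Define the dictionary language D ⊆ Σ* whose words are: (a) ⟨i..n⟩ # j # ⟨1..i−1⟩ for every ordered pair (i, j) of adjacent vertices of G; (b) $ ⟨1..i−1⟩ for every vertex i; (c) ⟨i..n⟩ $ for every vertex i; (d) ⟨i..n⟩ $ γ $ ⟨1..j−1⟩ for every ordered pair (i, j) of adjacent vertices of G. Then T ∈ D* if and only if there exist vertices i and j with i adjacent to j in G, i adjacent to every vertex occurring in S, and j adjacent to every vertex occurring in S (i.e., S ∪ {i, j} extends to a clique if S is a clique). (This is the correctness of the simplified k-clique gadget in the reduction of Theorem 8 from k-Clique to Word Break.) -/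
/-!
Parsing is forced. Every dictionary word starts with `$` or with `⟨i..n⟩`, whose first letter
is `i`, and `⟨1..i-1⟩ ⟨i..n⟩ = N`. So once a parse has read `$ ⟨1..i-1⟩`, the text left is
`⟨i..n⟩ ⋯`. Each block `# v # N` of the first `T_S` then has to be read by a word of type (a),
which forces `i ~ v` and leaves `⟨i..n⟩ ⋯` again. At `$ γ $` only a type-(d) word fits (after a
type-(c) word the text would start with `γ`), which picks some `j ~ i` and leaves `⟨j..n⟩ ⋯`.
The second `T_S` then forces `j ~ v` for every `v ∈ S`, and a type-(c) word finishes the parse.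
-/

open Computability

namespace CliqueGadget

variable {n : ℕ}

/-- The special symbol `#`. -/
def hash : Fin n ⊕ Fin 3 := Sum.inr 0

/-- The special symbol `$`. -/
def dollar : Fin n ⊕ Fin 3 := Sum.inr 1

/-- The special symbol `γ`. -/
def gam : Fin n ⊕ Fin 3 := Sum.inr 2

/-- `⟨i..n⟩`: the word listing the vertex symbols `i, i+1, …, n` in increasing order. -/
def fromTo (i : Fin n) : List (Fin n ⊕ Fin 3) :=
  ((List.finRange n).filter fun v => decide (i ≤ v)).map Sum.inl

/-- `⟨1..i-1⟩`: the word listing the vertex symbols `1, …, i-1` in increasing order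
(empty if `i` is the first vertex). -/
def upTo (i : Fin n) : List (Fin n ⊕ Fin 3) :=
  ((List.finRange n).filter fun v => decide (v < i)).map Sum.inl

/-- `N = ⟨1..n⟩`: the word listing all vertex symbols in increasing order. -/
def allV (n : ℕ) : List (Fin n ⊕ Fin 3) := (List.finRange n).map Sum.inl

/-- The string `T_S = $ N # i₁ # N # i₂ # N # ⋯ # i_r # N $` for `S = (i₁, …, i_r)`. -/
def TS (S : List (Fin n)) : List (Fin n ⊕ Fin 3) :=
  [dollar] ++ allV n ++ (S.map fun v => [hash, Sum.inl v, hash] ++ allV n).flatten ++ [dollar]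

/-- The dictionary: (a) `⟨i..n⟩ # j # ⟨1..i-1⟩` for adjacent `i, j`;
(b) `$ ⟨1..i-1⟩` for every vertex `i`; (c) `⟨i..n⟩ $` for every vertex `i`;
(d) `⟨i..n⟩ $ γ $ ⟨1..j-1⟩` for adjacent `i, j`. -/
def dict (G : SimpleGraph (Fin n)) : Language (Fin n ⊕ Fin 3) :=
  {w | (∃ i j : Fin n, G.Adj i j ∧ w = fromTo i ++ [hash, Sum.inl j, hash] ++ upTo i) ∨
    (∃ i : Fin n, w = dollar :: upTo i) ∨
    (∃ i : Fin n, w = fromTo i ++ [dollar]) ∨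
    (∃ i j : Fin n, G.Adj i j ∧ w = fromTo i ++ [dollar, gam, dollar] ++ upTo j)}

end CliqueGadget

theorem List.filter_lt_append_filter_le {α : Type*} [LinearOrder α] {l : List α}
    (hl : l.Pairwise (· ≤ ·)) (i : α) :
    l.filter (· < i) ++ l.filter (i ≤ ·) = l := by
  induction l with
  | nil => rfl
  | cons a l ih =>
    obtain ⟨ha, hl⟩ := List.pairwise_cons.mp hl
    by_cases hai : a < i
    · simp [hai, ih hl, not_le.mpr hai]
    · have hle : ∀ b ∈ a :: l, i ≤ b := by
        simpa [not_lt.mp hai] using fun b hb => (not_lt.mp hai).trans (ha b hb)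
      rw [List.filter_eq_nil_iff.mpr (by simpa using hle),
        List.filter_eq_self.mpr (by simpa using hle), List.nil_append]

theorem List.exists_filter_le_eq_cons {α : Type*} [LinearOrder α] {l : List α}
    (hl : l.Pairwise (· ≤ ·)) {i : α} (hi : i ∈ l) :
    ∃ t, l.filter (i ≤ ·) = i :: t := by
  induction l with
  | nil => simp at hi
  | cons a l ih =>
    obtain ⟨ha, hl⟩ := List.pairwise_cons.mp hl
    rcases List.mem_cons.mp hi with rfl | hi
    · simp
    by_cases hia : i ≤ a
    · obtain rfl := le_antisymm (ha i hi) hia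
      simp
    · simpa [hia] using ih hl hi

theorem Language.mem_kstar_iff_eq_nil_or_append {α : Type*} {l : Language α} {x : List α} :
    x ∈ l∗ ↔ x = [] ∨ ∃ w ∈ l, ∃ r ∈ l∗, w ++ r = x := by
  conv_lhs => rw [← Language.one_add_self_mul_kstar_eq_kstar]
  rw [Language.mem_add, Language.mem_one, Language.mem_mul]

namespace CliqueGadget

variable {n : ℕ}

lemma upTo_append_fromTo (i : Fin n) : upTo i ++ fromTo i = allV n := by
  rw [upTo, fromTo, ← List.map_append, allV,
    List.filter_lt_append_filter_le ((List.pairwise_lt_finRange n).imp le_of_lt)]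

lemma exists_fromTo_eq_cons (i : Fin n) : ∃ t, fromTo i = Sum.inl i :: t := by
  obtain ⟨t, ht⟩ := List.exists_filter_le_eq_cons
    ((List.pairwise_lt_finRange n).imp le_of_lt) (List.mem_finRange i)
  exact ⟨t.map Sum.inl, by simp [fromTo, ht]⟩

lemma fromTo_append_inj {i j : Fin n} {x y : List (Fin n ⊕ Fin 3)} :
    fromTo i ++ x = fromTo j ++ y ↔ i = j ∧ x = y := by
  refine ⟨fun h => ?_, by rintro ⟨rfl, rfl⟩; rfl⟩
  obtain ⟨s, hs⟩ := exists_fromTo_eq_cons i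
  obtain ⟨t, ht⟩ := exists_fromTo_eq_cons j
  have hij : i = j := by simpa [hs, ht] using congrArg List.head? h
  subst hij
  exact ⟨rfl, List.append_cancel_left h⟩

lemma fromTo_append_ne_cons_inr {i : Fin n} {x y : List (Fin n ⊕ Fin 3)} (c : Fin 3) :
    fromTo i ++ x ≠ Sum.inr c :: y := by
  obtain ⟨t, ht⟩ := exists_fromTo_eq_cons i
  simp [ht]

variable {G : SimpleGraph (Fin n)}

lemma gam_cons_notMem_kstar (x : List (Fin n ⊕ Fin 3)) : gam :: x ∉ (dict G)∗ := by
  rw [Language.mem_kstar_iff_eq_nil_or_append]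
  rintro (h | ⟨w, hw, r, -, h⟩)
  · exact List.cons_ne_nil _ _ h
  rcases hw with ⟨i, j, -, rfl⟩ | ⟨i, rfl⟩ | ⟨i, rfl⟩ | ⟨i, j, -, rfl⟩ <;>
    simp [dollar, gam, fromTo_append_ne_cons_inr] at h

lemma dollar_cons_mem_kstar_iff {x : List (Fin n ⊕ Fin 3)} :
    dollar :: x ∈ (dict G)∗ ↔ ∃ i, ∃ r ∈ (dict G)∗, x = upTo i ++ r := by
  rw [Language.mem_kstar_iff_eq_nil_or_append]
  constructor
  · rintro (h | ⟨w, hw, r, hr, h⟩)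
    · exact absurd h (List.cons_ne_nil _ _)
    obtain ⟨i, rfl⟩ : ∃ i, w = dollar :: upTo i := by
      rcases hw with ⟨i, j, -, rfl⟩ | hb | ⟨i, rfl⟩ | ⟨i, j, -, rfl⟩
      all_goals first | exact hb | simp [dollar, fromTo_append_ne_cons_inr] at h
    exact ⟨i, r, hr, (List.cons.inj h).2.symm⟩
  · rintro ⟨i, r, hr, rfl⟩
    exact Or.inr ⟨_, Or.inr (Or.inl ⟨i, rfl⟩), r, hr, rfl⟩

lemma fromTo_append_mem_kstar_iff {i : Fin n} {x : List (Fin n ⊕ Fin 3)} :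
    fromTo i ++ x ∈ (dict G)∗ ↔
      (∃ j, G.Adj i j ∧ ∃ r ∈ (dict G)∗, x = hash :: Sum.inl j :: hash :: (upTo i ++ r)) ∨
      (∃ r ∈ (dict G)∗, x = dollar :: r) ∨
      (∃ j, G.Adj i j ∧ ∃ r ∈ (dict G)∗, x = dollar :: gam :: dollar :: (upTo j ++ r)) := by
  rw [Language.mem_kstar_iff_eq_nil_or_append]
  constructor
  · rintro (h | ⟨w, hw, r, hr, h⟩)
    · obtain ⟨t, ht⟩ := exists_fromTo_eq_cons i
      simp [ht] at h
    rcases hw with ⟨i', j, hadj, rfl⟩ | ⟨i', rfl⟩ | ⟨i', rfl⟩ | ⟨i', j, hadj, rfl⟩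
    · obtain ⟨rfl, rfl⟩ := fromTo_append_inj.mp (by simpa only [List.append_assoc] using h)
      exact Or.inl ⟨j, hadj, r, hr, rfl⟩
    · exact absurd h.symm (fromTo_append_ne_cons_inr 1)
    · obtain ⟨rfl, rfl⟩ := fromTo_append_inj.mp (by simpa only [List.append_assoc] using h)
      exact Or.inr (Or.inl ⟨r, hr, rfl⟩)
    · obtain ⟨rfl, rfl⟩ := fromTo_append_inj.mp (by simpa only [List.append_assoc] using h)
      exact Or.inr (Or.inr ⟨j, hadj, r, hr, rfl⟩)
  · rintro (⟨j, hadj, r, hr, rfl⟩ | ⟨r, hr, rfl⟩ | ⟨j, hadj, r, hr, rfl⟩)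
    · exact Or.inr ⟨_, Or.inl ⟨i, j, hadj, rfl⟩, r, hr, by simp⟩
    · exact Or.inr ⟨_, Or.inr (Or.inr (Or.inl ⟨i, rfl⟩)), r, hr, by simp⟩
    · exact Or.inr ⟨_, Or.inr (Or.inr (Or.inr ⟨i, j, hadj, rfl⟩)), r, hr, by simp⟩

lemma dollar_cons_allV_append_mem_kstar_iff {y : List (Fin n ⊕ Fin 3)} :
    dollar :: (allV n ++ y) ∈ (dict G)∗ ↔ ∃ i, fromTo i ++ y ∈ (dict G)∗ := by
  rw [dollar_cons_mem_kstar_iff]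
  refine exists_congr fun i => ?_
  rw [← upTo_append_fromTo i]
  simp

lemma fromTo_append_segment_mem_kstar_iff {i v : Fin n} {x : List (Fin n ⊕ Fin 3)} :
    fromTo i ++ hash :: Sum.inl v :: hash :: (allV n ++ x) ∈ (dict G)∗ ↔
      G.Adj i v ∧ fromTo i ++ x ∈ (dict G)∗ := by
  rw [fromTo_append_mem_kstar_iff, ← upTo_append_fromTo i]
  simp [hash, dollar]

def segments (S : List (Fin n)) : List (Fin n ⊕ Fin 3) :=
  (S.map fun v => [hash, Sum.inl v, hash] ++ allV n).flatten

lemma fromTo_append_segments_mem_kstar_iff {i : Fin n} (S : List (Fin n))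
    {x : List (Fin n ⊕ Fin 3)} :
    fromTo i ++ (segments S ++ x) ∈ (dict G)∗ ↔
      (∀ v ∈ S, G.Adj i v) ∧ fromTo i ++ x ∈ (dict G)∗ := by
  induction S with
  | nil => simp [segments]
  | cons v S ih =>
    have h : segments (v :: S) ++ x =
        hash :: Sum.inl v :: hash :: (allV n ++ (segments S ++ x)) := by
      simp [segments]
    rw [h, fromTo_append_segment_mem_kstar_iff, ih, List.forall_mem_cons, and_assoc]

lemma fromTo_append_gam_mem_kstar_iff {i : Fin n} {y : List (Fin n ⊕ Fin 3)} :
    fromTo i ++ dollar :: gam :: dollar :: (allV n ++ y) ∈ (dict G)∗ ↔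
      ∃ j, G.Adj i j ∧ fromTo j ++ y ∈ (dict G)∗ := by
  rw [fromTo_append_mem_kstar_iff]
  constructor
  · rintro (⟨j, -, r, -, h⟩ | ⟨r, hr, h⟩ | ⟨j, hadj, r, hr, h⟩)
    · simp [hash, dollar] at h
    · obtain rfl := (List.cons.inj h).2
      exact absurd hr (gam_cons_notMem_kstar _)
    · rw [← upTo_append_fromTo j] at h
      simp only [List.cons.injEq, List.append_assoc, List.append_cancel_left_eq, true_and] at h
      exact ⟨j, hadj, h ▸ hr⟩
  · rintro ⟨j, hadj, hj⟩
    exact Or.inr (Or.inr ⟨j, hadj, _, hj, by rw [← upTo_append_fromTo j]; simp⟩)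

lemma fromTo_append_dollar_mem_kstar (i : Fin n) : fromTo i ++ [dollar] ∈ (dict G)∗ :=
  fromTo_append_mem_kstar_iff.mpr (Or.inr (Or.inl ⟨[], Language.nil_mem_kstar _, rfl⟩))

theorem clique_gadget_correct_general (n : ℕ) (G : SimpleGraph (Fin n))
    (S : List (Fin n)) :
    (TS S ++ [gam] ++ TS S) ∈ (dict G)∗ ↔
      ∃ i j : Fin n, G.Adj i j ∧ (∀ v ∈ S, G.Adj i v) ∧ (∀ v ∈ S, G.Adj j v) := by
  have hT : TS S ++ [gam] ++ TS S = dollar :: (allV n ++ (segments S ++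
      dollar :: gam :: dollar :: (allV n ++ (segments S ++ [dollar])))) := by
    simp [TS, segments]
  rw [hT, dollar_cons_allV_append_mem_kstar_iff]
  simp only [fromTo_append_segments_mem_kstar_iff, fromTo_append_gam_mem_kstar_iff,
    fromTo_append_dollar_mem_kstar, and_true]
  constructor
  · rintro ⟨i, hi, j, hij, hj⟩
    exact ⟨i, j, hij, hi, hj⟩
  · rintro ⟨i, j, hij, hi, hj⟩
    exact ⟨i, hi, j, hij, hj⟩

theorem clique_gadget_correct (n : ℕ) (hn : 1 ≤ n) (G : SimpleGraph (Fin n))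
    (S : List (Fin n)) :
    (TS S ++ [gam] ++ TS S) ∈ (dict G)∗ ↔
      ∃ i j : Fin n, G.Adj i j ∧ (∀ v ∈ S, G.Adj i v) ∧ (∀ v ∈ S, G.Adj j v) :=
  clique_gadget_correct_general n G S

end CliqueGadget
end
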